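/- Let U ⊆ (𝕋ⁿ)² be a set of signed pairs. The following are equivalent: (1) U is a signed bend cone and U is closed in the subspace of signed pairs of (𝕋ⁿ)²; (2) there exists a subset A ⊆ 𝕋ⁿ such that U = A°, the signed polar of A. (Characterization of signed polars of sets of nonnegative tropical vectors.) -/

import Mathlib

/-- The tropical (max-plus) semiring 𝕋 = ℝ ∪ {−∞}, modeled as `WithBot ℝ`. -/
abbrev Trop : Type := WithBot ℝ

/-- The map 𝕋 → ℝ, x ↦ eˣ (with e^{−∞} = 0), inducing the metric
d(x,y) = |eˣ − e^y| on 𝕋. -/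
noncomputable def tropExp : Trop → ℝ := WithBot.recBotCoe (0 : ℝ) Real.exp

/-- The topology on 𝕋 induced by the metric d(x,y) = |eˣ − e^y|. -/
noncomputable instance : TopologicalSpace Trop :=
  TopologicalSpace.induced tropExp inferInstance

/-- A pair of vectors (x⁺, x⁻) ∈ (𝕋ⁿ)² is signed if, for every coordinate i,
x⁺_i = −∞ or x⁻_i = −∞. -/
def SignedVecPair {n : ℕ} (x : (Fin n → Trop) × (Fin n → Trop)) : Prop :=
  ∀ i, x.1 i = ⊥ ∨ x.2 i = ⊥

/-- Tropical scalar product of vectors: ⟨x,y⟩ = max_i (x_i + y_i). -/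
noncomputable def tdot {n : ℕ} (x y : Fin n → Trop) : Trop :=
  Finset.univ.sup fun i => x i + y i

/-- The "signed part" f^∨ of a pair of vectors f = (f⁺, f⁻):
f^{∨+}_i = f⁺_i if f⁺_i ≥ f⁻_i and −∞ otherwise;
f^{∨−}_i = f⁻_i if f⁻_i > f⁺_i and −∞ otherwise. -/
noncomputable def vee {n : ℕ} (f : (Fin n → Trop) × (Fin n → Trop)) :
    (Fin n → Trop) × (Fin n → Trop) :=
  (fun i => if f.2 i ≤ f.1 i then f.1 i else ⊥,
   fun i => if f.1 i < f.2 i then f.2 i else ⊥)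

/-- Tropical scalar action: (λ ⊙ f)_i = λ + f_i. -/
noncomputable def tsmul {n : ℕ} (l : Trop) (f : Fin n → Trop) : Fin n → Trop :=
  fun i => l + f i

/-- A monotone pre-congruence C ⊆ (𝕋ⁿ)²: stable by tropical scalar multiplication,
by componentwise max, by "transitivity" (f⁻ = g⁺ implies (f⁺,g⁻) ∈ C), and containing
every pair (f⁺,f⁻) with f⁺ ≥ f⁻. -/
structure IsMonotonePrecongruence {n : ℕ} (C : Set ((Fin n → Trop) × (Fin n → Trop))) : Prop where
  smul_mem : ∀ f ∈ C, ∀ l : Trop, (tsmul l f.1, tsmul l f.2) ∈ C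
  add_mem : ∀ f ∈ C, ∀ g ∈ C, (f.1 ⊔ g.1, f.2 ⊔ g.2) ∈ C
  trans_mem : ∀ f ∈ C, ∀ g ∈ C, f.2 = g.1 → (f.1, g.2) ∈ C
  monotone_mem : ∀ f : (Fin n → Trop) × (Fin n → Trop), f.2 ≤ f.1 → f ∈ C

/-- The pair x ⊕_i y = (x⁺ ⊕ y⁺_{∖i}, x⁻_{∖i} ⊕ y⁻), where z_{∖i} is z with
coordinate i replaced by −∞. -/
noncomputable def oplusI {n : ℕ} (i : Fin n)
    (x y : (Fin n → Trop) × (Fin n → Trop)) : (Fin n → Trop) × (Fin n → Trop) :=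
  (x.1 ⊔ Function.update y.1 i ⊥, Function.update x.2 i ⊥ ⊔ y.2)

/-- A signed bend cone R ⊆ (𝕋ⁿ)²: all elements are signed pairs, R contains all
pairs (x⁺, −∞), is stable by tropical scalar multiplication, and is stable under
the operations x, y ↦ (x ⊕ y)^∨ and x, y ↦ (x ⊕_i y)^∨ (the latter when x⁻_i = y⁺_i). -/
structure IsSignedBendCone {n : ℕ} (R : Set ((Fin n → Trop) × (Fin n → Trop))) : Prop where
  signed : ∀ x ∈ R, SignedVecPair x
  pos_mem : ∀ xp : Fin n → Trop, (xp, fun _ => (⊥ : Trop)) ∈ R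
  smul_mem : ∀ x ∈ R, ∀ l : Trop, (tsmul l x.1, tsmul l x.2) ∈ R
  add_vee_mem : ∀ x ∈ R, ∀ y ∈ R, vee (x.1 ⊔ y.1, x.2 ⊔ y.2) ∈ R
  addI_vee_mem : ∀ x ∈ R, ∀ y ∈ R, ∀ i : Fin n, x.2 i = y.1 i → vee (oplusI i x y) ∈ R

/-- The one-sided polar B^⊲ = {a ∈ 𝕋ⁿ : ⟨x⁺,a⟩ ≥ ⟨x⁻,a⟩ for all (x⁺,x⁻) ∈ B}. -/
def onePolar {n : ℕ} (B : Set ((Fin n → Trop) × (Fin n → Trop))) : Set (Fin n → Trop) :=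
  {a | ∀ x ∈ B, tdot x.2 a ≤ tdot x.1 a}

/-- The signed part C^∨ of a set C ⊆ (𝕋ⁿ)²: the signed pairs belonging to C. -/
def signedPart {n : ℕ} (C : Set ((Fin n → Trop) × (Fin n → Trop))) :
    Set ((Fin n → Trop) × (Fin n → Trop)) :=
  {x ∈ C | SignedVecPair x}

/-- The signed polar A° of A ⊆ 𝕋ⁿ : the set of signed pairs (x⁺,x⁻) with
⟨x⁺,a⟩ ≥ ⟨x⁻,a⟩ for all a ∈ A. -/
def signedPolar {n : ℕ} (A : Set (Fin n → Trop)) :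
    Set ((Fin n → Trop) × (Fin n → Trop)) :=
  {x | SignedVecPair x ∧ ∀ a ∈ A, tdot x.2 a ≤ tdot x.1 a}

/-!
A signed polar is a closed signed bend cone: each inequality `⟨x⁻, a⟩ ≤ ⟨x⁺, a⟩` is closed and
is preserved by the bend operations.

Conversely, let `U` be a closed signed bend cone and `C = {f | f^∨ ∈ U}`. The bend axioms make
`C` a closed monotone precongruence; transitivity comes from axiom (d), which cancels the middle
term coordinate by coordinate. A closed monotone precongruence is cut out by tropical
half-spaces: after raising `p` to a finite vector, the set `{z | (p, z) ∈ C}` is closed, downward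
closed and stable under `⊔`, hence a box `{z | ⟨z, a⟩ ≤ 0}`, and this `a` separates `(p, m) ∉ C`
from `C`. Hence `U = (U^⊲)°`.
-/

open Set Filter Topology

lemma strictMono_tropExp : StrictMono tropExp := by
  intro a b hab
  induction b using WithBot.recBotCoe with
  | bot => exact absurd hab not_lt_bot
  | coe s =>
    induction a using WithBot.recBotCoe with
    | bot => exact Real.exp_pos s
    | coe r => exact Real.exp_lt_exp.2 (WithBot.coe_lt_coe.1 hab)

lemma range_tropExp : range tropExp = Ici 0 := by
  refine Subset.antisymm ?_ fun x (hx : 0 ≤ x) => ?_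
  · rintro _ ⟨a, rfl⟩
    induction a using WithBot.recBotCoe with
    | bot => exact le_refl (0 : ℝ)
    | coe r => exact (Real.exp_pos r).le
  · rcases hx.eq_or_lt with rfl | hx
    · exact ⟨⊥, rfl⟩
    · exact ⟨(Real.log x : Trop), Real.exp_log hx⟩

instance : OrderTopology Trop :=
  ⟨strictMono_tropExp.induced_topology_eq_preorder (range_tropExp ▸ ordConnected_Ici)⟩

lemma tropExp_add (a b : Trop) : tropExp (a + b) = tropExp a * tropExp b := by
  induction a using WithBot.recBotCoe with
  | bot => simp [tropExp]
  | coe r =>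
    induction b using WithBot.recBotCoe with
    | bot => simp [tropExp]
    | coe s => exact Real.exp_add r s

@[fun_prop]
lemma Trop.continuous_coe : Continuous ((↑) : ℝ → Trop) :=
  continuous_induced_rng.2 Real.continuous_exp

lemma Trop.continuous_add_const (c : Trop) : Continuous fun x : Trop => x + c :=
  continuous_induced_rng.2 <|
    (continuous_induced_dom.mul continuous_const).congr fun x => (tropExp_add x c).symm

lemma Trop.tendsto_coe_atBot : Tendsto ((↑) : ℝ → Trop) atBot (𝓝 ⊥) := by
  refine tendsto_order.2 ⟨fun a ha => absurd ha not_lt_bot, fun a ha => ?_⟩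
  obtain ⟨s, rfl⟩ := WithBot.ne_bot_iff_exists.1 ha.ne'
  exact (eventually_lt_atBot s).mono fun r hr => WithBot.coe_lt_coe.2 hr

lemma Trop.exists_nonpos_add_eq {b h : Trop} (hbh : b ≤ h) : ∃ l : Trop, l ≤ 0 ∧ l + h = b := by
  induction b using WithBot.recBotCoe with
  | bot => exact ⟨⊥, bot_le, WithBot.bot_add h⟩
  | coe x =>
    obtain ⟨y, rfl⟩ := WithBot.ne_bot_iff_exists.1 (ne_bot_of_le_ne_bot WithBot.coe_ne_bot hbh)
    refine ⟨↑(x - y), WithBot.coe_le_coe.2 (sub_nonpos.2 (WithBot.coe_le_coe.1 hbh)), ?_⟩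
    rw [← WithBot.coe_add, sub_add_cancel]

lemma Trop.coe_neg_add_nonpos_iff {μ : ℝ} {x : Trop} : ((-μ : ℝ) : Trop) + x ≤ 0 ↔ x ≤ μ := by
  induction x using WithBot.recBotCoe with
  | bot => simp
  | coe s =>
    rw [← WithBot.coe_add, ← WithBot.coe_zero, WithBot.coe_le_coe, WithBot.coe_le_coe,
      neg_add_nonpos_iff]

lemma Trop.exists_mem_iff_coe_add_nonpos {L : Set ℝ} (hcl : IsClosed L) (hlow : IsLowerSet L)
    (hne : L.Nonempty) : ∃ a : Trop, ∀ r : ℝ, r ∈ L ↔ (r : Trop) + a ≤ 0 := by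
  by_cases hbdd : BddAbove L
  · refine ⟨↑(-sSup L), fun r => ⟨fun hr => ?_, fun hr => hlow ?_ (hcl.csSup_mem hne hbdd)⟩⟩
    · rw [← WithBot.coe_add, ← WithBot.coe_zero, WithBot.coe_le_coe]
      linarith [le_csSup hbdd hr]
    · rw [← WithBot.coe_add, ← WithBot.coe_zero, WithBot.coe_le_coe] at hr
      linarith
  · refine ⟨⊥, fun r => ⟨fun _ => by simp, fun _ => ?_⟩⟩
    obtain ⟨s, hs, hrs⟩ := not_bddAbove_iff.1 hbdd r
    exact hlow hrs.le hs

section tdot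

variable {n : ℕ}

lemma le_tdot (x a : Fin n → Trop) (i : Fin n) : x i + a i ≤ tdot x a :=
  Finset.le_sup (f := fun j => x j + a j) (Finset.mem_univ i)

lemma tdot_le_iff {x a : Fin n → Trop} {t : Trop} : tdot x a ≤ t ↔ ∀ i, x i + a i ≤ t := by
  simp [tdot]

lemma tdot_mono_left {x y : Fin n → Trop} (h : x ≤ y) (a : Fin n → Trop) :
    tdot x a ≤ tdot y a :=
  tdot_le_iff.2 fun i => (add_le_add_left (h i) _).trans (le_tdot y a i)

lemma tdot_sup_left (x y a : Fin n → Trop) : tdot (x ⊔ y) a = tdot x a ⊔ tdot y a := by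
  simp only [tdot, Pi.sup_apply, ← Finset.sup_sup]
  exact Finset.sup_congr rfl fun i _ => (max_add_add_right (x i) (y i) (a i)).symm

lemma tdot_tsmul (l : Trop) (x a : Fin n → Trop) : tdot (tsmul l x) a = l + tdot x a := by
  simp only [tdot, tsmul, add_assoc]
  exact (Finset.apply_sup_eq_sup_comp (l + ·) (fun x y => (max_add_add_left l x y).symm)
    (WithBot.add_bot l)).symm

lemma tdot_le_tdot_update_bot_sup (x a : Fin n → Trop) (i : Fin n) :
    tdot x a ≤ tdot (Function.update x i ⊥) a ⊔ (x i + a i) := by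
  refine tdot_le_iff.2 fun j => ?_
  rcases eq_or_ne j i with rfl | hj
  · exact le_sup_right
  · exact le_sup_of_le_left (by simpa [hj] using le_tdot (Function.update x i ⊥) a j)

lemma continuous_tdot_left (a : Fin n → Trop) : Continuous fun x => tdot x a :=
  Continuous.finset_sup_apply fun i _ => (Trop.continuous_add_const (a i)).comp (continuous_apply i)

end tdot

section vee

variable {n : ℕ} {f g : (Fin n → Trop) × (Fin n → Trop)}

lemma signedVecPair_vee (f : (Fin n → Trop) × (Fin n → Trop)) : SignedVecPair (vee f) := by
  intro i
  by_cases h : f.2 i ≤ f.1 i <;> simp [vee, h, not_lt.2, lt_of_not_ge]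

lemma vee_of_signedVecPair (hf : SignedVecPair f) : vee f = f := by
  ext i <;> rcases hf i with h | h <;> simp [vee, h, not_lt, eq_comm]

lemma vee_of_snd_le (h : f.2 ≤ f.1) : vee f = (f.1, ⊥) := by
  ext i <;> simp [vee, h i, not_lt.2 (h i)]

lemma vee_sup_vee (f g : (Fin n → Trop) × (Fin n → Trop)) :
    vee ((vee f).1 ⊔ (vee g).1, (vee f).2 ⊔ (vee g).2) = vee (f.1 ⊔ g.1, f.2 ⊔ g.2) := by
  ext i <;> simp only [vee, Pi.sup_apply] <;> split_ifs <;> grind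

lemma vee_tsmul (l : Trop) (f : (Fin n → Trop) × (Fin n → Trop)) :
    vee (tsmul l f.1, tsmul l f.2) = (tsmul l (vee f).1, tsmul l (vee f).2) := by
  induction l using WithBot.recBotCoe with
  | bot => ext i <;> simp [vee, tsmul]
  | coe r =>
    ext i <;> simp only [vee, tsmul, WithBot.add_le_add_iff_left WithBot.coe_ne_bot,
      WithBot.add_lt_add_iff_left WithBot.coe_ne_bot] <;> split_ifs <;> simp

lemma vee_snd_le (f : (Fin n → Trop) × (Fin n → Trop)) : (vee f).2 ≤ f.2 := fun i => by
  simp only [vee]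
  split_ifs <;> simp

lemma vee_update_snd_bot {i : Fin n} (hi : f.2 i ≤ f.1 i) :
    vee (f.1, Function.update f.2 i ⊥) = vee f := by
  ext j <;> rcases eq_or_ne j i with rfl | hj <;> simp [vee, not_lt.2 hi, *]

lemma vee_oplusI_vee {i : Fin n} (hfi : f.1 i < f.2 i) (hgi : g.2 i ≤ g.1 i) :
    vee (oplusI i (vee f) (vee g)) =
      vee (Function.update (f.1 ⊔ g.1) i ⊥, Function.update (f.2 ⊔ g.2) i ⊥) := by
  ext j <;> simp only [vee, oplusI, Pi.sup_apply, Function.update_apply] <;> split_ifs <;> grind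

lemma vee_sup_piecewise_bot {A H B : Fin n → Trop} {S : Finset (Fin n)}
    (hS : ∀ i, i ∈ S ↔ A i < H i ∧ B i ≤ H i) :
    vee (A ⊔ S.piecewise ⊥ H, S.piecewise ⊥ H ⊔ B) = vee (A, B) := by
  ext i <;> by_cases hi : i ∈ S <;> have := hS i <;>
    simp only [vee, Finset.piecewise, hi, if_true, if_false, Pi.sup_apply, Pi.bot_apply] <;>
    split_ifs <;> grind

lemma tdot_vee_fst_le_tdot_fst (a : Fin n → Trop) (h : tdot f.2 a ≤ tdot f.1 a) :
    tdot f.1 a ≤ tdot (vee f).1 a := by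
  by_contra! hlt
  have hpos : ⊥ < tdot f.1 a := bot_le.trans_lt hlt
  refine lt_irrefl (tdot f.1 a) ((Finset.sup_lt_iff hpos).2 fun i _ => ?_)
  by_cases hi : f.2 i ≤ f.1 i
  · calc f.1 i + a i = (vee f).1 i + a i := by simp [vee, hi]
      _ ≤ tdot (vee f).1 a := le_tdot _ _ i
      _ < tdot f.1 a := hlt
  · rcases eq_or_ne (a i) ⊥ with ha | ha
    · simpa [ha] using hpos
    · calc f.1 i + a i < f.2 i + a i := WithBot.add_lt_add_right ha (not_le.1 hi)
        _ ≤ tdot f.2 a := le_tdot _ _ i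
        _ ≤ tdot f.1 a := h

lemma tdot_vee_snd_le_tdot_vee_fst {a : Fin n → Trop} (h : tdot f.2 a ≤ tdot f.1 a) :
    tdot (vee f).2 a ≤ tdot (vee f).1 a :=
  calc tdot (vee f).2 a ≤ tdot f.2 a := tdot_mono_left (vee_snd_le f) a
    _ ≤ tdot f.1 a := h
    _ ≤ tdot (vee f).1 a := tdot_vee_fst_le_tdot_fst a h

end vee

section signedPolar

variable {n : ℕ}

lemma isSignedBendCone_signedPolar (A : Set (Fin n → Trop)) :
    IsSignedBendCone (signedPolar A) where
  signed _ hx := hx.1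
  pos_mem xp := ⟨fun _ => Or.inr rfl, fun a _ => by simp [tdot]⟩
  smul_mem x hx l := by
    refine ⟨fun i => (hx.1 i).imp (fun h => by simp [tsmul, h]) (fun h => by simp [tsmul, h]),
      fun a ha => ?_⟩
    simpa only [tdot_tsmul] using add_le_add_right (hx.2 a ha) l
  add_vee_mem x hx y hy := by
    refine ⟨signedVecPair_vee _, fun a ha => tdot_vee_snd_le_tdot_vee_fst ?_⟩
    simpa only [tdot_sup_left] using sup_le_sup (hx.2 a ha) (hy.2 a ha)
  addI_vee_mem x hx y hy i hxy := by
    refine ⟨signedVecPair_vee _, fun a ha => tdot_vee_snd_le_tdot_vee_fst ?_⟩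
    simp only [oplusI, tdot_sup_left]
    have hx' : tdot x.2 a ≤ tdot x.1 a := hx.2 a ha
    refine sup_le ((tdot_mono_left (update_le_self_iff.2 bot_le) a).trans
      (hx'.trans le_sup_left)) ?_
    -- the term of `y⁺` at `i` is dominated through `x⁻ i = y⁺ i`
    calc tdot y.2 a ≤ tdot y.1 a := hy.2 a ha
      _ ≤ tdot (Function.update y.1 i ⊥) a ⊔ (y.1 i + a i) := tdot_le_tdot_update_bot_sup y.1 a i
      _ ≤ tdot x.1 a ⊔ tdot (Function.update y.1 i ⊥) a :=
        sup_le le_sup_right (le_sup_of_le_left (hxy ▸ (le_tdot x.2 a i).trans hx'))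

lemma isClosed_preimage_val_signedPolar (A : Set (Fin n → Trop)) :
    IsClosed ((Subtype.val : {x : (Fin n → Trop) × (Fin n → Trop) // SignedVecPair x} →
      (Fin n → Trop) × (Fin n → Trop)) ⁻¹' signedPolar A) := by
  have : (Subtype.val : {x : (Fin n → Trop) × (Fin n → Trop) // SignedVecPair x} → _) ⁻¹'
      signedPolar A = ⋂ a ∈ A, {x | tdot x.1.2 a ≤ tdot x.1.1 a} := by
    ext x; simp [signedPolar, x.2]
  rw [this]
  exact isClosed_biInter fun a _ => isClosed_le
    ((continuous_tdot_left a).comp (continuous_snd.comp continuous_subtype_val))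
    ((continuous_tdot_left a).comp (continuous_fst.comp continuous_subtype_val))

end signedPolar

namespace IsSignedBendCone

variable {n : ℕ} {U : Set ((Fin n → Trop) × (Fin n → Trop))}
  {f g : (Fin n → Trop) × (Fin n → Trop)}

lemma mem_preimage_vee (hU : IsSignedBendCone U) (hf : f ∈ U) : f ∈ vee ⁻¹' U := by
  rwa [mem_preimage, vee_of_signedVecPair (hU.signed f hf)]

lemma mem_preimage_vee_of_snd_le (hU : IsSignedBendCone U) (h : f.2 ≤ f.1) : f ∈ vee ⁻¹' U := by
  rw [mem_preimage, vee_of_snd_le h]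
  exact hU.pos_mem f.1

lemma tsmul_mem_preimage_vee (hU : IsSignedBendCone U) (hf : f ∈ vee ⁻¹' U) (l : Trop) :
    (tsmul l f.1, tsmul l f.2) ∈ vee ⁻¹' U := by
  rw [mem_preimage, vee_tsmul]
  exact hU.smul_mem _ hf l

lemma sup_mem_preimage_vee (hU : IsSignedBendCone U) (hf : f ∈ vee ⁻¹' U)
    (hg : g ∈ vee ⁻¹' U) : (f.1 ⊔ g.1, f.2 ⊔ g.2) ∈ vee ⁻¹' U := by
  rw [mem_preimage, ← vee_sup_vee]
  exact hU.add_vee_mem _ hf _ hg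

lemma update_sup_mem_preimage_vee (hU : IsSignedBendCone U) (hf : f ∈ vee ⁻¹' U)
    (hg : g ∈ vee ⁻¹' U) (i : Fin n) (hfi : f.1 i < f.2 i) (hfg : f.2 i = g.1 i)
    (hgi : g.2 i ≤ g.1 i) :
    (Function.update (f.1 ⊔ g.1) i ⊥, Function.update (f.2 ⊔ g.2) i ⊥) ∈ vee ⁻¹' U := by
  rw [mem_preimage, ← vee_oplusI_vee hfi hgi]
  exact hU.addI_vee_mem _ hf _ hg i (by simp only [vee]; rw [if_pos hfi, if_pos hgi, hfg])

lemma update_snd_bot_mem_preimage_vee (hU : IsSignedBendCone U) (hf : f ∈ vee ⁻¹' U)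
    (i : Fin n) : (f.1, Function.update f.2 i ⊥) ∈ vee ⁻¹' U := by
  rcases le_or_gt (f.2 i) (f.1 i) with hi | hi
  · rwa [mem_preimage, vee_update_snd_bot hi]
  · have hδ : (Function.update ⊥ i (f.2 i), ⊥) ∈ vee ⁻¹' U := hU.mem_preimage_vee_of_snd_le bot_le
    have h := hU.sup_mem_preimage_vee (hU.update_sup_mem_preimage_vee hf hδ i hi (by simp) bot_le)
      (hU.mem_preimage_vee_of_snd_le (f := (f.1, ⊥)) bot_le)
    convert h using 1
    ext j <;> rcases eq_or_ne j i with rfl | hj <;> simp [*]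

lemma update_snd_mem_preimage_vee (hU : IsSignedBendCone U) (hf : f ∈ vee ⁻¹' U) {i : Fin n}
    {v : Trop} (hv : v ≤ f.2 i) : (f.1, Function.update f.2 i v) ∈ vee ⁻¹' U := by
  obtain ⟨l, hl0, hl⟩ := Trop.exists_nonpos_add_eq hv
  have h := hU.sup_mem_preimage_vee (hU.update_snd_bot_mem_preimage_vee hf i)
    (hU.tsmul_mem_preimage_vee hf l)
  convert h using 1
  ext j <;> rcases eq_or_ne j i with rfl | hj <;>
    simp [tsmul, add_le_of_nonpos_left hl0, *]

lemma mem_preimage_vee_of_le (hU : IsSignedBendCone U) (hf : f ∈ vee ⁻¹' U) (h₁ : f.1 ≤ g.1)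
    (h₂ : g.2 ≤ f.2) : g ∈ vee ⁻¹' U := by
  have key : ∀ S : Finset (Fin n), (f.1, S.piecewise g.2 f.2) ∈ vee ⁻¹' U := by
    intro S
    induction S using Finset.induction_on with
    | empty => simpa using hf
    | insert i S hi ih =>
      rw [Finset.piecewise_insert]
      exact hU.update_snd_mem_preimage_vee ih (by simpa [hi] using h₂ i)
  convert hU.sup_mem_preimage_vee (key Finset.univ) (hU.mem_preimage_vee_of_snd_le
    (f := (g.1, ⊥)) bot_le) using 1
  ext j <;> simp [sup_eq_right.2 (h₁ j)]

lemma mem_of_le (hU : IsSignedBendCone U) (hf : f ∈ U) (hg : SignedVecPair g) (h₁ : f.1 ≤ g.1)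
    (h₂ : g.2 ≤ f.2) : g ∈ U := by
  simpa [vee_of_signedVecPair hg] using hU.mem_preimage_vee_of_le (hU.mem_preimage_vee hf) h₁ h₂

lemma trans_mem_preimage_vee (hU : IsSignedBendCone U) {A H B : Fin n → Trop}
    (hAH : (A, H) ∈ vee ⁻¹' U) (hHB : (H, B) ∈ vee ⁻¹' U) : (A, B) ∈ vee ⁻¹' U := by
  -- Off `Hdom`, `vee (A ⊔ H, H ⊔ B) = vee (A, B)`. On `Hdom`, where `H` dominates both sides,
  -- `H` is cancelled one coordinate at a time by axiom (d); the value of `B` lost there is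
  -- restored from the copy of `(A, H)` scaled by `B i - H i ≤ 0`.
  let Hdom := Finset.univ.filter fun i => A i < H i ∧ B i ≤ H i
  have key : ∀ S ⊆ Hdom, (A ⊔ S.piecewise ⊥ H, S.piecewise ⊥ H ⊔ B) ∈ vee ⁻¹' U := by
    intro S
    induction S using Finset.induction_on with
    | empty => simpa using hU.sup_mem_preimage_vee hAH hHB
    | insert i S hi ih =>
      intro hS
      obtain ⟨hAi, hBi⟩ : A i < H i ∧ B i ≤ H i :=
        (Finset.mem_filter.1 (hS (S.mem_insert_self i))).2
      have hHi : S.piecewise ⊥ H i = H i := Finset.piecewise_eq_of_notMem _ _ _ hi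
      have hr := hU.update_sup_mem_preimage_vee
        (hU.mem_preimage_vee_of_le (g := (A, S.piecewise ⊥ H)) hAH le_rfl
          (Finset.piecewise_le_of_le_of_le _ (fun _ => bot_le) le_rfl))
        (ih ((S.subset_insert i).trans hS)) i (by simpa [hHi]) (by simp [hHi, hAi.le])
        (by simp [hHi, hBi])
      obtain ⟨l, hl0, hl⟩ := Trop.exists_nonpos_add_eq hBi
      refine hU.mem_preimage_vee_of_le
        (hU.sup_mem_preimage_vee hr (hU.tsmul_mem_preimage_vee hAH l))
        (fun j => ?_) (fun j => ?_) <;> rw [Finset.piecewise_insert] <;>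
        rcases eq_or_ne j i with rfl | hj <;> simp [tsmul, add_le_of_nonpos_left hl0, *]
  have := key Hdom subset_rfl
  rwa [mem_preimage, vee_sup_piecewise_bot (by simp [Hdom])] at this

lemma isMonotonePrecongruence_preimage_vee (hU : IsSignedBendCone U) :
    IsMonotonePrecongruence (vee ⁻¹' U) where
  smul_mem _ hf l := hU.tsmul_mem_preimage_vee hf l
  add_mem _ hf _ hg := hU.sup_mem_preimage_vee hf hg
  trans_mem f hf g hg hfg := hU.trans_mem_preimage_vee hf (by rwa [hfg])
  monotone_mem _ h := hU.mem_preimage_vee_of_snd_le h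

lemma isClosed_preimage_vee (hU : IsSignedBendCone U)
    (hcl : IsClosed ((Subtype.val : {x : (Fin n → Trop) × (Fin n → Trop) // SignedVecPair x} →
      (Fin n → Trop) × (Fin n → Trop)) ⁻¹' U)) :
    IsClosed (vee ⁻¹' U) := by
  -- `vee` jumps at ties `f.1 i = f.2 i`. On each closed piece of the sign pattern `S` it is
  -- replaced by the continuous projection `π S`; this loses nothing, since `vee f` arises from
  -- `π S f` by raising the positive part and lowering the negative part.
  let π (S : Finset (Fin n)) (f : (Fin n → Trop) × (Fin n → Trop)) :
      (Fin n → Trop) × (Fin n → Trop) := (S.piecewise f.1 ⊥, S.piecewise ⊥ f.2)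
  have hπ : ∀ S f, SignedVecPair (π S f) := fun S f i => by
    by_cases hi : i ∈ S <;> simp [π, hi]
  have hcont : ∀ S, Continuous (π S) := fun S => by
    refine .prodMk (continuous_pi fun i => ?_) (continuous_pi fun i => ?_) <;>
      by_cases hi : i ∈ S <;> simp only [Finset.piecewise, hi, if_true, if_false] <;> fun_prop
  have : vee ⁻¹' U = ⋃ S : Finset (Fin n),
      {f | (∀ i ∈ S, f.2 i ≤ f.1 i) ∧ ∀ i ∉ S, f.1 i ≤ f.2 i} ∩ π S ⁻¹' U := by
    ext f
    simp only [mem_preimage, mem_iUnion, mem_inter_iff, mem_ofPred_eq]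
    constructor
    · intro hf
      refine ⟨Finset.univ.filter fun i => f.2 i ≤ f.1 i,
        ⟨by simp, fun i hi => by simp_all [le_of_lt]⟩, ?_⟩
      convert hf using 1
      ext i <;> by_cases hi : f.2 i ≤ f.1 i <;> simp [π, vee, hi, not_lt.2, lt_of_not_ge]
    · rintro ⟨S, ⟨hS, hSc⟩, hf⟩
      refine hU.mem_of_le hf (signedVecPair_vee f) (fun i => ?_) (fun i => ?_) <;>
        by_cases hi : i ∈ S <;> simp [π, vee, hi, hS, apply_ite (· ≤ f.2 i)]
  rw [this]
  refine isClosed_iUnion_of_finite fun S => IsClosed.inter ?_ ?_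
  · simp only [ofPred_and, ofPred_forall]
    exact (isClosed_biInter fun i _ => isClosed_le (by fun_prop) (by fun_prop)).inter
      (isClosed_biInter fun i _ => isClosed_le (by fun_prop) (by fun_prop))
  · exact hcl.preimage ((hcont S).subtype_mk (hπ S))

end IsSignedBendCone

lemma exists_mem_iff_tdot_nonpos {n : ℕ} {D : Set (Fin n → Trop)} (hcl : IsClosed D)
    (hlow : IsLowerSet D) (hsup : SupClosed D) {q : Fin n → Trop} (hq : q ∈ D)
    (hq_ne : ∀ i, q i ≠ ⊥) : ∃ a : Fin n → Trop, ∀ z, z ∈ D ↔ tdot z a ≤ 0 := by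
  have hbot : ⊥ ∈ D := hlow bot_le hq
  have hcoord : ∀ i, ∃ a : Trop, ∀ x : Trop, Function.update ⊥ i x ∈ D ↔ x + a ≤ 0 := by
    intro i
    obtain ⟨r₀, hr₀⟩ := WithBot.ne_bot_iff_exists.1 (hq_ne i)
    obtain ⟨a, ha⟩ := Trop.exists_mem_iff_coe_add_nonpos (L := {r : ℝ | Function.update ⊥ i ↑r ∈ D})
      (hcl.preimage (by fun_prop))
      (fun r s hsr hr => hlow (by simpa using WithBot.coe_le_coe.2 hsr) hr)
      ⟨r₀, hlow (update_le_iff.2 ⟨hr₀.le, fun _ _ => bot_le⟩) hq⟩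
    refine ⟨a, fun x => ?_⟩
    induction x using WithBot.recBotCoe with
    | bot =>
      have : Function.update (⊥ : Fin n → Trop) i ⊥ = ⊥ := Function.update_eq_self_iff.2 rfl
      simpa [this] using hbot
    | coe r => exact ha r
  choose a ha using hcoord
  refine ⟨a, fun z => ?_⟩
  rw [tdot_le_iff, ← forall_congr' fun i => ha i (z i)]
  refine ⟨fun hz i => hlow (by simp [update_le_iff]) hz, fun h => ?_⟩
  have hz : (Finset.univ.sup fun i => Function.update ⊥ i (z i)) = z := by
    ext j
    rw [Finset.sup_apply]
    refine le_antisymm (Finset.sup_le fun i _ => ?_)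
      (Finset.le_sup_of_le (Finset.mem_univ j) (by simp))
    rcases eq_or_ne j i with rfl | h <;> simp [*]
  rw [← hz]
  exact Finset.sup_induction hbot (fun _ h₁ _ h₂ => hsup h₁ h₂) fun i _ => h i

namespace IsMonotonePrecongruence

variable {n : ℕ} {C : Set ((Fin n → Trop) × (Fin n → Trop))}

lemma exists_mem_onePolar_tdot_lt (hC : IsMonotonePrecongruence C) (hcl : IsClosed C)
    {f : (Fin n → Trop) × (Fin n → Trop)} (hf : f ∉ C) :
    ∃ a ∈ onePolar C, tdot f.1 a < tdot f.2 a := by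
  obtain ⟨p, m⟩ := f
  have hlim : Tendsto (fun r : ℝ => ((p ⊔ fun _ => (r : Trop)), m)) atBot (𝓝 (p, m)) := by
    have hc : Continuous fun x : Trop => ((p ⊔ fun _ => x), m) :=
      (continuous_pi fun i => continuous_const.sup continuous_id).prodMk continuous_const
    have := (hc.tendsto ⊥).comp Trop.tendsto_coe_atBot
    rwa [show (p ⊔ fun _ => (⊥ : Trop)) = p from sup_bot_eq p] at this
  obtain ⟨r, hr⟩ := (hlim.eventually (hcl.isOpen_compl.mem_nhds hf)).exists
  set p' := p ⊔ fun _ => (r : Trop)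
  obtain ⟨a, ha⟩ := exists_mem_iff_tdot_nonpos (D := {z | (p', z) ∈ C})
    (hcl.preimage (by fun_prop))
    (fun z z' hz'z hz => hC.trans_mem _ hz (z, z') (hC.monotone_mem (z, z') hz'z) rfl)
    (fun z hz z' hz' => by simpa using hC.add_mem _ hz _ hz')
    (hC.monotone_mem (p', p') le_rfl)
    (fun i => ne_bot_of_le_ne_bot WithBot.coe_ne_bot le_sup_right)
  refine ⟨a, fun g hg => WithBot.forall_le_coe_iff_le.1 fun μ hμ => ?_, ?_⟩
  · have h₁ : (p', tsmul ↑(-μ) g.1) ∈ C :=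
      (ha _).2 (by rwa [tdot_tsmul, Trop.coe_neg_add_nonpos_iff])
    have h₂ := (ha _).1 (hC.trans_mem _ h₁ _ (hC.smul_mem g hg ↑(-μ)) rfl)
    rwa [tdot_tsmul, Trop.coe_neg_add_nonpos_iff] at h₂
  · calc tdot p a ≤ tdot p' a := tdot_mono_left le_sup_left a
      _ ≤ 0 := (ha p').1 (hC.monotone_mem (p', p') le_rfl)
      _ < tdot m a := not_le.1 fun h => hr ((ha m).2 h)

end IsMonotonePrecongruence

theorem signedPolar_characterization_general {n : ℕ}
    (U : Set ((Fin n → Trop) × (Fin n → Trop))) :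
    (IsSignedBendCone U ∧
        IsClosed ((Subtype.val :
          {x : (Fin n → Trop) × (Fin n → Trop) // SignedVecPair x} →
            (Fin n → Trop) × (Fin n → Trop)) ⁻¹' U)) ↔
      ∃ A : Set (Fin n → Trop), U = signedPolar A := by
  constructor
  · rintro ⟨hU, hcl⟩
    refine ⟨onePolar U, Subset.antisymm (fun x hx => ⟨hU.signed x hx, fun a ha => ha x hx⟩) ?_⟩
    rintro x ⟨hx, hxA⟩
    by_contra hxU
    obtain ⟨a, ha, hlt⟩ :=
      hU.isMonotonePrecongruence_preimage_vee.exists_mem_onePolar_tdot_lt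
        (hU.isClosed_preimage_vee hcl) (by rwa [mem_preimage, vee_of_signedVecPair hx])
    exact (hxA a fun u hu => ha u (hU.mem_preimage_vee hu)).not_gt hlt
  · rintro ⟨A, rfl⟩
    exact ⟨isSignedBendCone_signedPolar A, isClosed_preimage_val_signedPolar A⟩

/-- Characterization of signed polars: a set U of signed pairs is the signed polar
of some subset A ⊆ 𝕋ⁿ iff U is a signed bend cone that is closed in the subspace
of signed pairs of (𝕋ⁿ)². -/
theorem signedPolar_characterization {n : ℕ}
    (U : Set ((Fin n → Trop) × (Fin n → Trop)))
    (hU : ∀ x ∈ U, SignedVecPair x) :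
    (IsSignedBendCone U ∧
        IsClosed ((Subtype.val :
          {x : (Fin n → Trop) × (Fin n → Trop) // SignedVecPair x} →
            (Fin n → Trop) × (Fin n → Trop)) ⁻¹' U)) ↔
      ∃ A : Set (Fin n → Trop), U = signedPolar A :=
  signedPolar_characterization_general U
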